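/- In the additive Schwarz setting, suppose for each subdomain j the local generalized eigenproblem (I−ξ_{0j}ᵀ)D_jR_jAR_jᵀD_j(I−ξ_{0j})V = λ A_j^Neu V has A_j^Neu-orthonormal eigenpairs (V_{jk}, λ_{jk}), and let π_j be the projection onto span{V_{jk} : λ_{jk} > τ} parallel to span{V_{jk} : λ_{jk} ≤ τ}. Then for all U_j ∈ ℝ^{n_j}: (R_jAR_jᵀ D_j(I−ξ_{0j})(I−π_j)U_j, D_j(I−ξ_{0j})(I−π_j)U_j) ≤ τ (A_j^Neu U_j, U_j). -/

import Mathlib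

open Matrix Finset
open scoped Classical

/-!
Expand `U = ∑ₖ cₖ vₖ` in the eigenvectors, which form a basis of `ℝ^nj` because their Gram
matrix against `ANeu` is the identity. Since `(1 - ξᵀ) D (R A Rᵀ) D (1 - ξ)` is the
congruence `Cᵀ (R A Rᵀ) C` with `C = D (1 - ξ)` (here `D` diagonal, hence symmetric), the left side
is the quadratic form of that matrix at `(I - π) U = ∑_{λₖ ≤ τ} cₖ vₖ`, i.e.
`∑_{λₖ ≤ τ} λₖ cₖ² ≤ τ ∑ₖ cₖ² = τ (ANeu U, U)`.
-/

namespace Matrix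

variable {m : Type*} [Fintype m]

theorem transpose_mul_mul_mulVec_dotProduct {n : Type*} [Fintype n]
    (C : Matrix m n ℝ) (K : Matrix m m ℝ) (x : n → ℝ) :
    ((Cᵀ * K * C) *ᵥ x) ⬝ᵥ x = (K *ᵥ (C *ᵥ x)) ⬝ᵥ (C *ᵥ x) := by
  rw [Matrix.mul_assoc, ← mulVec_mulVec, mulVec_transpose, ← dotProduct_mulVec, ← mulVec_mulVec]

variable [DecidableEq m]

theorem eq_sum_dotProduct_smul_of_orthonormal {B : Matrix m m ℝ} {v : m → m → ℝ}
    (horth : ∀ k l, (B *ᵥ v k) ⬝ᵥ v l = if k = l then 1 else 0) (U : m → ℝ) :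
    U = ∑ k, ((B *ᵥ v k) ⬝ᵥ U) • v k := by
  set E : Matrix m m ℝ := Matrix.of v
  have hgram : E * Bᵀ * Eᵀ = 1 := by
    ext k l
    rw [one_apply, ← horth]
    simp only [E, mul_apply, transpose_apply, of_apply, dotProduct, mulVec, mul_comm]
  -- a one-sided inverse of a square matrix is two-sided, so the `v k` span
  have hinv : Eᵀ * (E * Bᵀ) = 1 := mul_eq_one_comm.mp hgram
  calc U = (Eᵀ * (E * Bᵀ)) *ᵥ U := by rw [hinv, one_mulVec]
    _ = ∑ k, ((B *ᵥ v k) ⬝ᵥ U) • v k := by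
      rw [← mulVec_mulVec, mulVec_transpose, vecMul_eq_sum]
      congr! with k
      rw [← mulVec_mulVec]
      simp only [E, mulVec, of_apply, dotProduct_mulVec, vecMul_transpose]

theorem mulVec_sum_smul_dotProduct_of_eigen {M B : Matrix m m ℝ} {v : m → m → ℝ} {lam : m → ℝ}
    (heig : ∀ k, M *ᵥ v k = lam k • (B *ᵥ v k))
    (horth : ∀ k l, (B *ᵥ v k) ⬝ᵥ v l = if k = l then 1 else 0) (s : Finset m) (c : m → ℝ) :
    (M *ᵥ ∑ k ∈ s, c k • v k) ⬝ᵥ ∑ k ∈ s, c k • v k = ∑ k ∈ s, lam k * c k ^ 2 := by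
  simp only [mulVec_sum, mulVec_smul, heig, smul_smul, sum_dotProduct, dotProduct_sum,
    smul_dotProduct, dotProduct_smul, horth, smul_eq_mul, mul_ite, mul_one, mul_zero]
  refine sum_congr rfl fun k hk => ?_
  rw [sum_ite_eq', if_pos hk]
  ring

theorem mulVec_sub_sum_filter_dotProduct_le {M B : Matrix m m ℝ} {v : m → m → ℝ} {lam : m → ℝ}
    (heig : ∀ k, M *ᵥ v k = lam k • (B *ᵥ v k))
    (horth : ∀ k l, (B *ᵥ v k) ⬝ᵥ v l = if k = l then 1 else 0) {τ : ℝ} (hτ : 0 ≤ τ)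
    {U w : m → ℝ} (hw : w = U - ∑ k ∈ univ.filter (fun k => τ < lam k), ((B *ᵥ v k) ⬝ᵥ U) • v k) :
    (M *ᵥ w) ⬝ᵥ w ≤ τ * ((B *ᵥ U) ⬝ᵥ U) := by
  set c : m → ℝ := fun k => (B *ᵥ v k) ⬝ᵥ U
  have hU : U = ∑ k, c k • v k := eq_sum_dotProduct_smul_of_orthonormal horth U
  have hw_low : w = ∑ k ∈ univ.filter (fun k => ¬τ < lam k), c k • v k := by
    rw [hw, sub_eq_iff_eq_add', sum_filter_add_sum_filter_not, ← hU]
  have hBU : (B *ᵥ U) ⬝ᵥ U = ∑ k, c k ^ 2 := by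
    rw [hU]
    simpa only [one_mul] using
      mulVec_sum_smul_dotProduct_of_eigen (fun k => (one_smul ℝ _).symm) horth _ c
  rw [hw_low, mulVec_sum_smul_dotProduct_of_eigen heig horth, hBU, mul_sum]
  calc ∑ k ∈ univ.filter (fun k => ¬τ < lam k), lam k * c k ^ 2
      ≤ ∑ k ∈ univ.filter (fun k => ¬τ < lam k), τ * c k ^ 2 :=
        sum_le_sum fun k hk =>
          mul_le_mul_of_nonneg_right (not_lt.mp (mem_filter.mp hk).2) (sq_nonneg _)
    _ ≤ ∑ k, τ * c k ^ 2 :=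
        sum_le_sum_of_subset_of_nonneg (filter_subset _ _) fun k _ _ => by positivity

end Matrix

theorem stmt18_general {n nj : ℕ}
    (A : Matrix (Fin n) (Fin n) ℝ)
    (R : Matrix (Fin nj) (Fin n) ℝ)
    (D : Matrix (Fin nj) (Fin nj) ℝ) (hD : D.IsDiag)
    (xi : Matrix (Fin nj) (Fin nj) ℝ)
    (ANeu : Matrix (Fin nj) (Fin nj) ℝ)
    (v : Fin nj → (Fin nj → ℝ)) (lam : Fin nj → ℝ)
    (heig : ∀ k,
      ((1 - xiᵀ) * D * (R * A * Rᵀ) * D * (1 - xi)) *ᵥ v k = lam k • (ANeu *ᵥ v k))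
    (horth : ∀ k l, (ANeu *ᵥ v k) ⬝ᵥ v l = if k = l then 1 else 0)
    (τ : ℝ) (hτ : 0 < τ)
    (π : (Fin nj → ℝ) → (Fin nj → ℝ))
    (hπ : ∀ u, π u = ∑ k ∈ Finset.univ.filter (fun k => τ < lam k),
      ((ANeu *ᵥ v k) ⬝ᵥ u) • v k) :
    ∀ U : Fin nj → ℝ,
      ((R * A * Rᵀ) *ᵥ (D *ᵥ ((1 - xi) *ᵥ (U - π U)))) ⬝ᵥ
          (D *ᵥ ((1 - xi) *ᵥ (U - π U))) ≤
        τ * ((ANeu *ᵥ U) ⬝ᵥ U) := by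
  intro U
  have hcongr : (1 - xiᵀ) * D * (R * A * Rᵀ) * D * (1 - xi)
      = (D * (1 - xi))ᵀ * (R * A * Rᵀ) * (D * (1 - xi)) := by
    rw [transpose_mul, transpose_sub, transpose_one, hD.isSymm.eq]
    simp only [Matrix.mul_assoc]
  rw [hcongr] at heig
  have key := mulVec_sub_sum_filter_dotProduct_le heig horth hτ.le (w := U - π U) (by rw [hπ])
  rw [transpose_mul_mul_mulVec_dotProduct] at key
  simpa only [mulVec_mulVec] using key

theorem stmt18 {n nj : ℕ}
    (A : Matrix (Fin n) (Fin n) ℝ) (hA : A.PosDef)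
    (R : Matrix (Fin nj) (Fin n) ℝ)
    (D : Matrix (Fin nj) (Fin nj) ℝ) (hD : D.IsDiag)
    (xi : Matrix (Fin nj) (Fin nj) ℝ) (hxi : xi * xi = xi)
    (ANeu : Matrix (Fin nj) (Fin nj) ℝ) (hANeu : ANeu.PosDef)
    (v : Fin nj → (Fin nj → ℝ)) (lam : Fin nj → ℝ)
    (heig : ∀ k,
      ((1 - xiᵀ) * D * (R * A * Rᵀ) * D * (1 - xi)) *ᵥ v k = lam k • (ANeu *ᵥ v k))
    (horth : ∀ k l, (ANeu *ᵥ v k) ⬝ᵥ v l = if k = l then 1 else 0)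
    (τ : ℝ) (hτ : 0 < τ)
    (π : (Fin nj → ℝ) → (Fin nj → ℝ))
    (hπ : ∀ u, π u = ∑ k ∈ Finset.univ.filter (fun k => τ < lam k),
      ((ANeu *ᵥ v k) ⬝ᵥ u) • v k) :
    ∀ U : Fin nj → ℝ,
      ((R * A * Rᵀ) *ᵥ (D *ᵥ ((1 - xi) *ᵥ (U - π U)))) ⬝ᵥ
          (D *ᵥ ((1 - xi) *ᵥ (U - π U))) ≤
        τ * ((ANeu *ᵥ U) ⬝ᵥ U) :=
  stmt18_general A R D hD xi ANeu v lam heig horth τ hτ π hπ
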